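/- arXiv:2508.14714 — 3 statements merged into one kernel-verified Lean document; each statement's English description precedes it below -/
import Mathlib

section
/- Let n ≥ 4 be an integer. For every permutation α of ZMod n and every chord {i,j} ∈ E, there exist a sign ε ∈ {1, −1} and integer exponents m : E → ℤ such that for every injective z : ZMod n → ℝ one has u_{ij}(z ∘ α) = ε · ∏_{e ∈ E} u_e(z)^{m(e)}. (In the paper's notation, the dihedral coordinate u^α_{ij} of the relabeled configuration is, identically on the configuration space, a signed Laurent monomial in the standard dihedral coordinates.) -/
namespace M0n

/-- `{i, j}` is a chord of the `n`-gon: `j ∉ {i-1, i, i+1}`. -/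
def IsChord (n : ℕ) (p : Sym2 (ZMod n)) : Prop :=
  ∀ i j : ZMod n, p = s(i, j) → j ≠ i - 1 ∧ j ≠ i ∧ j ≠ i + 1

instance (n : ℕ) [NeZero n] : DecidablePred (IsChord n) := fun p =>
  inferInstanceAs (Decidable (∀ i j : ZMod n, p = s(i, j) → j ≠ i - 1 ∧ j ≠ i ∧ j ≠ i + 1))

/-- The finite set `E` of chords of the `n`-gon. -/
def chords (n : ℕ) [NeZero n] : Finset (Sym2 (ZMod n)) :=
  Finset.univ.filter (IsChord n)

/-- `x` lies in the cyclic open interval `{i+1, …, j-1}` from `i` to `j`. -/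
def CycBtw {n : ℕ} (i x j : ZMod n) : Prop :=
  0 < (x - i).val ∧ (x - i).val < (j - i).val

instance {n : ℕ} (i x j : ZMod n) : Decidable (CycBtw i x j) :=
  inferInstanceAs (Decidable (0 < (x - i).val ∧ (x - i).val < (j - i).val))

/-- Two chords cross: exactly one endpoint of `q` lies in the cyclic open interval
from `i` to `j`, for every ordered representation `(i, j)` of `p`. -/
def Crosses (n : ℕ) (p q : Sym2 (ZMod n)) : Prop :=
  ∀ i j k l : ZMod n, p = s(i, j) → q = s(k, l) → Xor (CycBtw i k j) (CycBtw i l j)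

instance (n : ℕ) [NeZero n] (p q : Sym2 (ZMod n)) : Decidable (Crosses n p q) :=
  inferInstanceAs (Decidable (∀ i j k l : ZMod n,
    p = s(i, j) → q = s(k, l) → Xor (CycBtw i k j) (CycBtw i l j)))

/-- The dihedral coordinate (cross-ratio)
`u_{ij}(z) = ((z i - z (j+1)) (z (i+1) - z j)) / ((z i - z j) (z (i+1) - z (j+1)))`,
well defined on unordered pairs. -/
def u {n : ℕ} {K : Type*} [Field K] (z : ZMod n → K) : Sym2 (ZMod n) → K :=
  Sym2.lift ⟨fun i j =>
    ((z i - z (j + 1)) * (z (i + 1) - z j)) / ((z i - z j) * (z (i + 1) - z (j + 1))), by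
      intro i j
      have h1 : (z i - z (j + 1)) * (z (i + 1) - z j)
          = (z j - z (i + 1)) * (z (j + 1) - z i) := by ring
      have h2 : (z i - z j) * (z (i + 1) - z (j + 1))
          = (z j - z i) * (z (j + 1) - z (i + 1)) := by ring
      dsimp only
      rw [h1, h2]⟩

/-- The cyclic interval `{a, a+1, …, a+m-1}` in `ZMod n`. -/
def cycInt {n : ℕ} (a : ZMod n) (m : ℕ) : Finset (ZMod n) :=
  (Finset.range m).image fun t : ℕ => a + (t : ZMod n)

/-- A partition of `ZMod n` into four nonempty cyclic intervals `A, B, C, D`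
appearing in this cyclic order. -/
structure CyclicFourPartition (n : ℕ) where
  a : ZMod n
  p : ℕ
  q : ℕ
  r : ℕ
  t : ℕ
  hp : 0 < p
  hq : 0 < q
  hr : 0 < r
  ht : 0 < t
  hsum : p + q + r + t = n

namespace CyclicFourPartition

variable {n : ℕ} (P : CyclicFourPartition n)

def A : Finset (ZMod n) := cycInt P.a P.p
def B : Finset (ZMod n) := cycInt (P.a + (P.p : ZMod n)) P.q
def C : Finset (ZMod n) := cycInt (P.a + (P.p : ZMod n) + (P.q : ZMod n)) P.r
def D : Finset (ZMod n) := cycInt (P.a + (P.p : ZMod n) + (P.q : ZMod n) + (P.r : ZMod n)) P.t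

end CyclicFourPartition

/-- A sign pattern is consistent if it does not contradict any extended u-relation:
for every cyclic 4-partition `(A,B,C,D)`, one of the two products of signs is `1`. -/
def Consistent (n : ℕ) (s : Sym2 (ZMod n) → ℤ) : Prop :=
  ∀ P : CyclicFourPartition n,
    (∏ x ∈ P.A, ∏ y ∈ P.C, s s(x, y)) = 1 ∨ (∏ x ∈ P.B, ∏ y ∈ P.D, s s(x, y)) = 1

/-- A sign pattern is realizable if it is the sign vector of the dihedral coordinates
of some injective real configuration. -/
def Realizable (n : ℕ) [NeZero n] (s : Sym2 (ZMod n) → ℤ) : Prop :=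
  ∃ z : ZMod n → ℝ, Function.Injective z ∧ ∀ e ∈ chords n, Real.sign (u z e) = (s e : ℝ)

/-- The length of a chord `{i,j}`: `min (d, n - d)` where `d = (j - i).val`. -/
def chordLength (n : ℕ) (p : Sym2 (ZMod n)) : ℕ :=
  Sym2.lift ⟨fun i j => min (j - i).val (i - j).val, fun _ _ => min_comm _ _⟩ p

/-- `Neg z`: the number of negative chords of a real configuration. -/
noncomputable def negCount (n : ℕ) [NeZero n] (z : ZMod n → ℝ) : ℕ :=
  Set.ncard {e : Sym2 (ZMod n) | e ∈ chords n ∧ u z e < 0}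

/-- The set of real points of `M_{0,n}` in its dihedral embedding:
nowhere-zero real solutions of all primitive u-relations in `ℝ^E`. -/
def Vset (n : ℕ) [NeZero n] : Set ({e : Sym2 (ZMod n) // e ∈ chords n} → ℝ) :=
  {w | (∀ c, w c ≠ 0) ∧ ∀ c,
    w c + ∏ e ∈ Finset.univ.filter
        (fun e : {e : Sym2 (ZMod n) // e ∈ chords n} => Crosses n e.1 c.1), w e = 1}

/-- The part `M_{0,n}(ℝ_s)` of `V` in the open orthant given by the sign pattern `s`. -/
def VsSet (n : ℕ) [NeZero n] (s : Sym2 (ZMod n) → ℤ) :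
    Set ({e : Sym2 (ZMod n) // e ∈ chords n} → ℝ) :=
  {w ∈ Vset n | ∀ c : {e : Sym2 (ZMod n) // e ∈ chords n}, Real.sign (w c) = (s c.1 : ℝ)}

/-!
Relabelling turns `u_{ij}` into the cross-ratio `[a, b; c, d]` of the four distinct marked
points `α i, α (i+1), α j, α (j+1)`, so it suffices to show that every such cross-ratio is a
signed monomial in the `u_e`. Since `[a, b; c, d] = g b / g a` with `g x = (x - c) / (x - d)`,
the cross-ratio telescopes along any cyclic arc from `a` to `b` that avoids `c` and `d`, and
symmetrically in `(c, d)`. For `(c, d) = (y, y + 1)` the factors `[x, x + 1; y, y + 1]` are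
exactly the coordinates `u_{xy}`, which settles the case where `{a, b}` and `{c, d}` do not
interleave on the circle; the interleaving case reduces to it through
`[a, b; c, d] = -[a, c; b, d] · [c, b; a, d]`.
-/

section CrossRatio

variable {K : Type*} [Field K]

def crossRatio (a b c d : K) : K :=
  ((a - d) * (b - c)) / ((a - c) * (b - d))

theorem crossRatio_eq_div_div (a b c d : K) :
    crossRatio a b c d = (b - c) / (b - d) / ((a - c) / (a - d)) := by
  rw [crossRatio, div_div_div_eq]
  ring_nf

theorem crossRatio_comm_pairs (a b c d : K) : crossRatio c d a b = crossRatio a b c d := by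
  unfold crossRatio
  ring_nf

theorem crossRatio_swap_fst (a b c d : K) : crossRatio b a c d = (crossRatio a b c d)⁻¹ := by
  unfold crossRatio
  rw [inv_div]
  ring_nf

theorem crossRatio_swap_snd (a b c d : K) : crossRatio a b d c = (crossRatio a b c d)⁻¹ :=
  (inv_div _ _).symm

theorem crossRatio_ne_zero {a b c d : K} (hac : a ≠ c) (had : a ≠ d) (hbc : b ≠ c)
    (hbd : b ≠ d) : crossRatio a b c d ≠ 0 := by
  unfold crossRatio
  simp [sub_ne_zero, *]

theorem crossRatio_eq_neg_mul {a b c d : K} (hab : a ≠ b) (hac : a ≠ c) (hbd : b ≠ d)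
    (hcd : c ≠ d) : crossRatio a b c d = -(crossRatio a c b d * crossRatio c b a d) := by
  have := sub_ne_zero.mpr hab
  have := sub_ne_zero.mpr hac
  have := sub_ne_zero.mpr hbd
  have := sub_ne_zero.mpr hcd
  have := sub_ne_zero.mpr hac.symm
  unfold crossRatio
  field_simp
  ring

theorem crossRatio_div_crossRatio {o a b c d : K} (hoc : o ≠ c) (hod : o ≠ d) :
    crossRatio o b c d / crossRatio o a c d = crossRatio a b c d := by
  have : (o - c) / (o - d) ≠ 0 := div_ne_zero (sub_ne_zero.mpr hoc) (sub_ne_zero.mpr hod)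
  simp only [crossRatio_eq_div_div]
  exact div_div_div_cancel_right₀ this _ _

theorem prod_range_div_eq_div {G₀ : Type*} [CommGroupWithZero G₀] (f : ℕ → G₀) (p : ℕ)
    (hf : ∀ x ≤ p, f x ≠ 0) : ∏ x ∈ Finset.range p, f (x + 1) / f x = f p / f 0 := by
  induction p with
  | zero => simp [div_self (hf 0 le_rfl)]
  | succ p ih =>
    rw [Finset.prod_range_succ, ih fun x hx => hf x (hx.trans p.le_succ), mul_comm,
      div_mul_div_cancel₀ (hf p p.le_succ)]

theorem crossRatio_eq_prod_range (w : ℕ → K) (c d : K) (p : ℕ)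
    (hc : ∀ x ≤ p, w x ≠ c) (hd : ∀ x ≤ p, w x ≠ d) :
    crossRatio (w 0) (w p) c d = ∏ x ∈ Finset.range p, crossRatio (w x) (w (x + 1)) c d := by
  simp only [crossRatio_eq_div_div]
  exact (prod_range_div_eq_div (fun x => (w x - c) / (w x - d)) p fun x hx =>
    div_ne_zero (sub_ne_zero.mpr (hc x hx)) (sub_ne_zero.mpr (hd x hx))).symm

end CrossRatio

section SignedMonomial

variable {n : ℕ} {K : Type*} [Field K]

theorem u_mk (z : ZMod n → K) (i j : ZMod n) :
    u z s(i, j) = crossRatio (z i) (z (i + 1)) (z j) (z (j + 1)) := rfl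

variable [NeZero n]

theorem mk_mem_chords {i j : ZMod n} (h₁ : i ≠ j + 1) (h₂ : i ≠ j) (h₃ : i + 1 ≠ j) :
    s(i, j) ∈ chords n := by
  refine Finset.mem_filter.mpr ⟨Finset.mem_univ _, fun a b hab => ?_⟩
  rcases Sym2.eq_iff.mp hab with ⟨rfl, rfl⟩ | ⟨rfl, rfl⟩
  · exact ⟨fun h => h₁ (by rw [h]; ring), Ne.symm h₂, Ne.symm h₃⟩
  · exact ⟨fun h => h₃ (by rw [h]; ring), h₂, h₁⟩

theorem pairwise_ne_of_mk_mem_chords {i j : ZMod n} (h : s(i, j) ∈ chords n) :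
    i ≠ i + 1 ∧ i ≠ j ∧ i ≠ j + 1 ∧ i + 1 ≠ j ∧ i + 1 ≠ j + 1 ∧ j ≠ j + 1 := by
  obtain ⟨h₁, h₂, h₃⟩ := (Finset.mem_filter.mp h).2 i j rfl
  have hone : (1 : ZMod n) ≠ 0 := fun h₀ =>
    h₂ (by rw [← mul_one j, ← mul_one i, h₀, mul_zero, mul_zero])
  exact ⟨fun h => hone (by simpa using h), Ne.symm h₂, fun h => h₁ (by rw [h]; ring),
    Ne.symm h₃, fun h => h₂ (add_right_cancel h).symm, fun h => hone (by simpa using h)⟩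

theorem u_ne_zero {z : ZMod n → K} (hz : Function.Injective z) {e : Sym2 (ZMod n)}
    (he : e ∈ chords n) : u z e ≠ 0 := by
  induction e using Sym2.ind with
  | _ i j =>
    obtain ⟨-, h₁, h₂, h₃, h₄, -⟩ := pairwise_ne_of_mk_mem_chords he
    exact crossRatio_ne_zero (hz.ne h₁) (hz.ne h₂) (hz.ne h₃) (hz.ne h₄)

variable (n) in
def IsSignedMonomial (F : (ZMod n → K) → K) : Prop :=
  ∃ (ε : K) (m : Sym2 (ZMod n) → ℤ), (ε = 1 ∨ ε = -1) ∧
    ∀ z : ZMod n → K, Function.Injective z → F z = ε * ∏ e ∈ chords n, u z e ^ m e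

namespace IsSignedMonomial

variable {F G : (ZMod n → K) → K}

theorem congr (hF : IsSignedMonomial n F)
    (h : ∀ z : ZMod n → K, Function.Injective z → F z = G z) : IsSignedMonomial n G := by
  obtain ⟨ε, m, hε, hm⟩ := hF
  exact ⟨ε, m, hε, fun z hz => (h z hz).symm.trans (hm z hz)⟩

theorem one : IsSignedMonomial n fun _ : ZMod n → K => 1 :=
  ⟨1, 0, Or.inl rfl, fun z _ => by simp⟩

theorem mul (hF : IsSignedMonomial n F) (hG : IsSignedMonomial n G) :
    IsSignedMonomial n fun z => F z * G z := by
  obtain ⟨ε₁, m₁, hε₁, hm₁⟩ := hF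
  obtain ⟨ε₂, m₂, hε₂, hm₂⟩ := hG
  refine ⟨ε₁ * ε₂, m₁ + m₂, ?_, fun z hz => ?_⟩
  · rcases hε₁ with rfl | rfl <;> rcases hε₂ with rfl | rfl <;> norm_num
  · dsimp only
    have hpow : ∀ e ∈ chords n, u z e ^ (m₁ + m₂) e = u z e ^ m₁ e * u z e ^ m₂ e :=
      fun e he => zpow_add₀ (u_ne_zero hz he) _ _
    rw [hm₁ z hz, hm₂ z hz, Finset.prod_congr rfl hpow, Finset.prod_mul_distrib]
    ring

theorem inv (hF : IsSignedMonomial n F) : IsSignedMonomial n fun z => (F z)⁻¹ := by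
  obtain ⟨ε, m, hε, hm⟩ := hF
  refine ⟨ε, -m, hε, fun z hz => ?_⟩
  have hε' : ε⁻¹ = ε := by rcases hε with rfl | rfl <;> norm_num
  simp only [hm z hz, mul_inv, hε', ← Finset.prod_inv_distrib, ← zpow_neg, Pi.neg_apply]

theorem neg (hF : IsSignedMonomial n F) : IsSignedMonomial n fun z => -F z := by
  obtain ⟨ε, m, hε, hm⟩ := hF
  refine ⟨-ε, m, ?_, fun z hz => by dsimp only; rw [hm z hz, neg_mul]⟩
  rcases hε with rfl | rfl <;> norm_num

theorem div (hF : IsSignedMonomial n F) (hG : IsSignedMonomial n G) :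
    IsSignedMonomial n fun z => F z / G z :=
  (hF.mul hG.inv).congr fun _ _ => (div_eq_mul_inv _ _).symm

theorem prod {ι : Type*} (s : Finset ι) {F : ι → (ZMod n → K) → K}
    (h : ∀ i ∈ s, IsSignedMonomial n (F i)) :
    IsSignedMonomial n fun z => ∏ i ∈ s, F i z := by
  classical
  induction s using Finset.induction with
  | empty => simpa using one
  | insert a s ha ih =>
    simp only [Finset.prod_insert ha]
    exact (h a (s.mem_insert_self a)).mul (ih fun i hi => h i (Finset.mem_insert_of_mem hi))

end IsSignedMonomial

theorem isSignedMonomial_u {e : Sym2 (ZMod n)} (he : e ∈ chords n) :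
    IsSignedMonomial n fun z : ZMod n → K => u z e := by
  classical
  refine ⟨1, fun e' => if e' = e then 1 else 0, Or.inl rfl, fun z _ => ?_⟩
  rw [one_mul, Finset.prod_eq_single_of_mem e he fun b _ hb => by simp [hb]]
  simp

end SignedMonomial

section Polygon

variable {n : ℕ} {K : Type*} [Field K]

theorem add_natCast_ne_self (y : ZMod n) {m : ℕ} (h₀ : 0 < m) (hm : m < n) :
    y + (m : ZMod n) ≠ y := fun h =>
  h₀.ne' (Nat.eq_zero_of_dvd_of_lt ((ZMod.natCast_eq_zero_iff m n).mp (add_eq_left.mp h)) hm)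

theorem add_two_add_ne {y : ZMod n} {x : ℕ} (hx : x + 3 ≤ n) :
    y + 2 + x ≠ y ∧ y + 2 + x ≠ y + 1 := by
  have h₀ : y + 2 + x = y + ((x + 2 : ℕ) : ZMod n) := by push_cast; ring
  have h₁ : y + 2 + x = y + 1 + ((x + 1 : ℕ) : ZMod n) := by push_cast; ring
  exact ⟨h₀ ▸ add_natCast_ne_self y (by omega) (by omega),
    h₁ ▸ add_natCast_ne_self (y + 1) (by omega) (by omega)⟩

variable [NeZero n]

theorem exists_add_two_add_eq {a y : ZMod n} (hay : a ≠ y) (hay' : a ≠ y + 1) :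
    ∃ k : ℕ, k + 3 ≤ n ∧ y + 2 + k = a := by
  set k := (a - (y + 2)).val
  have hk : y + 2 + (k : ZMod n) = a := by rw [ZMod.natCast_zmod_val]; ring
  refine ⟨k, ?_, hk⟩
  by_contra hkn
  have hk_lt : k < n := ZMod.val_lt _
  rcases (by omega : k + 1 = n ∨ k + 2 = n) with h | h
  · have h₀ : ((k + 1 : ℕ) : ZMod n) = 0 := by rw [h, ZMod.natCast_self]
    push_cast at h₀
    exact hay' (by rw [← hk]; linear_combination h₀)
  · have h₀ : ((k + 2 : ℕ) : ZMod n) = 0 := by rw [h, ZMod.natCast_self]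
    push_cast at h₀
    exact hay (by rw [← hk]; linear_combination h₀)

theorem isSignedMonomial_crossRatio_add_two (y : ZMod n) {k : ℕ} (hk : k + 3 ≤ n) :
    IsSignedMonomial n fun z : ZMod n → K =>
      crossRatio (z (y + 2)) (z (y + 2 + k)) (z y) (z (y + 1)) := by
  have hcast : ∀ x : ℕ, y + 2 + ((x + 1 : ℕ) : ZMod n) = y + 2 + x + 1 := fun x => by
    push_cast; ring
  refine (IsSignedMonomial.prod (Finset.range k)
    (F := fun (x : ℕ) z => u z s(y + 2 + (x : ZMod n), y))
    fun x hx => isSignedMonomial_u ?_).congr fun z hz => ?_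
  · have hx := Finset.mem_range.mp hx
    exact mk_mem_chords (add_two_add_ne (by omega)).2 (add_two_add_ne (by omega)).1
      (hcast x ▸ (add_two_add_ne (by omega)).1)
  · have := crossRatio_eq_prod_range (fun x : ℕ => z (y + 2 + x)) (z y) (z (y + 1)) k
      (fun x hx => hz.ne (add_two_add_ne (by omega)).1)
      (fun x hx => hz.ne (add_two_add_ne (by omega)).2)
    simp only [Nat.cast_zero, add_zero, hcast] at this
    exact this.symm

theorem isSignedMonomial_crossRatio_succ {a b y : ZMod n} (ha : a ≠ y) (ha' : a ≠ y + 1)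
    (hb : b ≠ y) (hb' : b ≠ y + 1) :
    IsSignedMonomial n fun z : ZMod n → K => crossRatio (z a) (z b) (z y) (z (y + 1)) := by
  obtain ⟨k, hk, rfl⟩ := exists_add_two_add_eq ha ha'
  obtain ⟨l, hl, rfl⟩ := exists_add_two_add_eq hb hb'
  have ho := add_two_add_ne (y := y) (x := 0) (by omega)
  rw [Nat.cast_zero, add_zero] at ho
  exact ((isSignedMonomial_crossRatio_add_two y hl).div
    (isSignedMonomial_crossRatio_add_two y hk)).congr fun z hz =>
      crossRatio_div_crossRatio (hz.ne ho.1) (hz.ne ho.2)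

theorem isSignedMonomial_crossRatio_arc {a b c : ZMod n} {r : ℕ}
    (h : ∀ y ≤ r, c + y ≠ a ∧ c + y ≠ b) :
    IsSignedMonomial n fun z : ZMod n → K => crossRatio (z a) (z b) (z c) (z (c + r)) := by
  have hcast : ∀ y : ℕ, c + ((y + 1 : ℕ) : ZMod n) = c + y + 1 := fun y => by push_cast; ring
  refine (IsSignedMonomial.prod (Finset.range r)
    (F := fun (y : ℕ) z => crossRatio (z a) (z b) (z (c + y)) (z (c + y + 1)))
    fun y hy => ?_).congr fun z hz => ?_
  · have hy := Finset.mem_range.mp hy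
    obtain ⟨ha, hb⟩ := h y hy.le
    obtain ⟨ha', hb'⟩ := hcast y ▸ h (y + 1) hy
    exact isSignedMonomial_crossRatio_succ ha.symm ha'.symm hb.symm hb'.symm
  · have := crossRatio_eq_prod_range (fun y : ℕ => z (c + y)) (z a) (z b) r
      (fun y hy => hz.ne (h y hy).1) (fun y hy => hz.ne (h y hy).2)
    simp only [Nat.cast_zero, add_zero, hcast] at this
    rw [← crossRatio_comm_pairs, this]
    exact Finset.prod_congr rfl fun y _ => crossRatio_comm_pairs _ _ _ _

theorem isSignedMonomial_crossRatio_of_val_lt {a b c d : ZMod n}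
    (ha : (d - c).val < (a - c).val) (hb : (d - c).val < (b - c).val) :
    IsSignedMonomial n fun z : ZMod n → K => crossRatio (z a) (z b) (z c) (z d) := by
  have hd : c + ((d - c).val : ZMod n) = d := by rw [ZMod.natCast_zmod_val]; ring
  have hval : ∀ x : ZMod n, ∀ y ≤ (d - c).val, c + y = x → (x - c).val = y := by
    rintro x y hy rfl
    rw [add_sub_cancel_left, ZMod.val_cast_of_lt (hy.trans_lt (ZMod.val_lt _))]
  rw [← hd]
  exact isSignedMonomial_crossRatio_arc fun y hy =>
    ⟨fun h => by have := hval a y hy h; omega, fun h => by have := hval b y hy h; omega⟩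

theorem val_sub_add_val_sub (x y c : ZMod n) :
    (x - y).val + (y - c).val = (x - c).val ∨ (x - y).val + (y - c).val = (x - c).val + n := by
  rw [← sub_add_sub_cancel x y c]
  rcases lt_or_ge ((x - y).val + (y - c).val) n with h | h
  · exact Or.inl (ZMod.val_add_of_lt h).symm
  · exact Or.inr (ZMod.val_add_val_of_le h)

theorem isSignedMonomial_crossRatio {a b c d : ZMod n}
    (hab : a ≠ b) (hac : a ≠ c) (had : a ≠ d) (hbc : b ≠ c) (hbd : b ≠ d) (hcd : c ≠ d) :
    IsSignedMonomial n fun z : ZMod n → K => crossRatio (z a) (z b) (z c) (z d) := by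
  have val_ne {x y : ZMod n} (h : x ≠ y) : (x - c).val ≠ (y - c).val :=
    fun hv => h (sub_left_inj.mp (ZMod.val_injective n hv))
  wlog hαβ : (a - c).val < (b - c).val generalizing a b
  · exact (this hab.symm hbc hbd hac had (by have := val_ne hab; omega)).inv.congr
      fun z _ => by rw [crossRatio_swap_fst (z a), inv_inv]
  have hα : 0 < (a - c).val := Nat.pos_of_ne_zero (by simpa using val_ne hac)
  have hδ : 0 < (d - c).val := Nat.pos_of_ne_zero (by simpa using val_ne hcd.symm)
  -- `(x - c).val` is the cyclic position of `x` seen from `c`; the relations below let `omega`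
  -- translate these positions into positions seen from `a` and from `d`.
  have hδα := val_ne had.symm
  have hδβ := val_ne hbd.symm
  have := (a - d).val_lt
  have := (b - d).val_lt
  have := (b - c).val_lt
  have := (d - a).val_lt
  have := (b - a).val_lt
  have := val_sub_add_val_sub a d c
  have := val_sub_add_val_sub b d c
  have := val_sub_add_val_sub d a c
  have := val_sub_add_val_sub b a c
  have hcd' := val_sub_add_val_sub c d c
  have hca' := val_sub_add_val_sub c a c
  rw [sub_self, ZMod.val_zero] at hcd' hca'
  rcases lt_or_gt_of_ne hδα with hδα' | hαδ
  · exact isSignedMonomial_crossRatio_of_val_lt hδα' (hδα'.trans hαβ)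
  rcases lt_or_gt_of_ne hδβ with hδβ' | hβδ
  · -- `{a, b}` and `{c, d}` interleave
    have h₁ : IsSignedMonomial n fun z : ZMod n → K => crossRatio (z a) (z c) (z d) (z b) :=
      isSignedMonomial_crossRatio_of_val_lt (by omega) (by omega)
    have h₂ : IsSignedMonomial n fun z : ZMod n → K => crossRatio (z c) (z b) (z a) (z d) :=
      isSignedMonomial_crossRatio_of_val_lt (by omega) (by omega)
    exact (h₁.inv.mul h₂).neg.congr fun z hz => by
      rw [crossRatio_eq_neg_mul (hz.ne hab) (hz.ne hac) (hz.ne hbd) (hz.ne hcd),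
        crossRatio_swap_snd (z a) (z c) (z b) (z d), inv_inv]
  · have h : IsSignedMonomial n fun z : ZMod n → K => crossRatio (z a) (z b) (z d) (z c) :=
      isSignedMonomial_crossRatio_of_val_lt (by omega) (by omega)
    exact h.inv.congr fun z _ => by rw [crossRatio_swap_snd (z a) (z b) (z c) (z d), inv_inv]

end Polygon

theorem relabeled_u_is_signed_monomial_general (n : ℕ) [NeZero n]
    (α : Equiv.Perm (ZMod n)) (i j : ZMod n) (hij : s(i, j) ∈ chords n) :
    ∃ (ε : ℝ) (m : Sym2 (ZMod n) → ℤ), (ε = 1 ∨ ε = -1) ∧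
      ∀ z : ZMod n → ℝ, Function.Injective z →
        u (fun k => z (α k)) s(i, j) = ε * ∏ e ∈ chords n, u z e ^ m e := by
  obtain ⟨hi, h₁, h₂, h₃, h₄, hj⟩ := pairwise_ne_of_mk_mem_chords hij
  exact isSignedMonomial_crossRatio (α.injective.ne hi) (α.injective.ne h₁)
    (α.injective.ne h₂) (α.injective.ne h₃) (α.injective.ne h₄) (α.injective.ne hj)

/-- For `n ≥ 4`, any permutation `α` of `ZMod n` and any chord `{i,j}`,
the dihedral coordinate of the relabeled configuration is, identically on the real
configuration space, a signed Laurent monomial in the standard dihedral coordinates. -/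
theorem relabeled_u_is_signed_monomial (n : ℕ) [NeZero n] (hn : 4 ≤ n)
    (α : Equiv.Perm (ZMod n)) (i j : ZMod n) (hij : s(i, j) ∈ chords n) :
    ∃ (ε : ℝ) (m : Sym2 (ZMod n) → ℤ), (ε = 1 ∨ ε = -1) ∧
      ∀ z : ZMod n → ℝ, Function.Injective z →
        u (fun k => z (α k)) s(i, j) = ε * ∏ e ∈ chords n, u z e ^ m e :=
  relabeled_u_is_signed_monomial_general n α i j hij

end M0n
end

section
/- Let n ≥ 6 be an integer and let z : ZMod n → ℝ be injective such that u_e(z) > 0 for every chord e of length 2 and u_{{0,3}}(z) < 0 (so {0,3} is a shortest negative chord). Let τ ∈ Perm(ZMod n) be the transposition exchanging 1 and 3. Then Neg(z ∘ τ) < Neg(z). -/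
/-!
Write `w = z ∘ (1 3)` and `a, b, c, d, e` for `z 0, …, z 4`. A chord `{i, j}` is negative for `z`
exactly when the edges `{z i, z (i + 1)}` and `{z j, z (j + 1)}` interleave on the line. Passing
to `w` replaces the edges `{a, b}, {b, c}, {c, d}, {d, e}` by `{a, d}, {d, c}, {c, b}, {b, e}` and
keeps the others, so chords avoiding `0` and `3` correspond under `(1 2)` with equal signs.

The rest follows from one fact about the line: if `{p, q}` and `{r, s}` interleave and `{x, y}`
separates `r` from `p` but not `p` from `q`, then it separates `r` from `s` (so `s ∉ {x, y}`).
With `{x, y}` an edge of `z`, it shows that `(0 3)` sends a chord through `0` or `3` that is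
negative for `w` but not for `z` to one that is negative for `z` but not for `w`. With
`{x, y} = {b, c}` or `{a, b}`, it shows that the chords `{0, 2}` and `{1, 3}` are not negative for
`w`, because `{a, b}, {d, e}` interleave while `{a, b}, {c, d}` and `{b, c}, {d, e}` do not; nor is
`{0, 3}`, as at most one of the three pairings of four points interleaves. This gives an injection
from the negative chords of `w` into those of `z` other than `{0, 3}`.
-/
namespace M0n

/-- Negative exactly when the pairs `{p, q}` and `{x, y}` interleave on the line. -/
def pairProd (p q x y : ℝ) : ℝ := (p - x) * (p - y) * ((q - x) * (q - y))

lemma pairProd_comm (p q x y : ℝ) : pairProd p q x y = pairProd x y p q := by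
  unfold pairProd; ring

lemma pairProd_swap_left (p q x y : ℝ) : pairProd p q x y = pairProd q p x y := by
  unfold pairProd; ring

lemma pairProd_swap_right (p q x y : ℝ) : pairProd p q x y = pairProd p q y x := by
  unfold pairProd; ring

lemma pairProd_congr {p q x y p' q' x' y' : ℝ} (h : s(p, q) = s(p', q'))
    (h' : s(x, y) = s(x', y')) : pairProd p q x y = pairProd p' q' x' y' := by
  rcases Sym2.eq_iff.mp h with ⟨rfl, rfl⟩ | ⟨rfl, rfl⟩ <;>
    rcases Sym2.eq_iff.mp h' with ⟨rfl, rfl⟩ | ⟨rfl, rfl⟩ <;> unfold pairProd <;> ring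

lemma pairProd_pos_of_neg {a b d e : ℝ} (h : pairProd a b d e < 0) : 0 < pairProd a d b e := by
  have key : pairProd a d b e = ((a - e) * (b - d)) ^ 2 - pairProd a b d e := by
    unfold pairProd; ring
  rw [key]
  linarith [sq_nonneg ((a - e) * (b - d))]

lemma pairProd_nonneg_of_neg_of_neg {a b d e x y : ℝ} (hab : 0 ≤ pairProd a b x y)
    (had : pairProd a d x y < 0) (hde : pairProd d e x y < 0) : 0 ≤ pairProd b e x y := by
  have key : pairProd b e x y * (pairProd a d x y * pairProd a d x y) =
      pairProd a b x y * (pairProd a d x y * pairProd d e x y) := by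
    unfold pairProd; ring
  refine nonneg_of_mul_nonneg_left ?_ (mul_pos_of_neg_of_neg had had)
  rw [key]
  exact mul_nonneg hab (mul_pos_of_neg_of_neg had hde).le

lemma sub_mul_sub_neg_cases {t p q : ℝ} (h : (t - p) * (t - q) < 0) :
    p < t ∧ t < q ∨ q < t ∧ t < p := by
  rcases le_total p q with hpq | hpq
  · exact .inl ((sub_mul_sub_neg_iff t hpq).mp h)
  · rw [mul_comm] at h
    exact .inr ((sub_mul_sub_neg_iff t hpq).mp h)

lemma sub_mul_sub_pos_cases {t p q : ℝ} (h : 0 < (t - p) * (t - q)) :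
    t < p ∧ t < q ∨ p < t ∧ q < t := by
  rcases le_total p q with hpq | hpq
  · rcases (sub_mul_sub_pos_iff t hpq).mp h with h | h
    exacts [.inl ⟨h, by linarith⟩, .inr ⟨by linarith, h⟩]
  · rw [mul_comm] at h
    rcases (sub_mul_sub_pos_iff t hpq).mp h with h | h
    exacts [.inl ⟨by linarith, h⟩, .inr ⟨h, by linarith⟩]

lemma pairProd_neg_of_linked {a b d e x y : ℝ} (hlink : pairProd a b d e < 0)
    (hab : 0 ≤ pairProd a b x y) (had : pairProd a d x y < 0) : pairProd d e x y < 0 := by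
  wlog hxy : x ≤ y generalizing x y
  · rw [pairProd_swap_right _ _ x] at hab had ⊢
    exact this hab had (le_of_not_ge hxy)
  rw [pairProd_comm] at hlink
  unfold pairProd at hlink hab had ⊢
  -- once every factor is turned into order relations, each ordering is linear arithmetic
  rcases mul_neg_iff.mp had with ⟨ha, hd⟩ | ⟨ha, hd⟩
  · have hb := nonneg_of_mul_nonneg_right hab ha
    refine mul_neg_of_neg_of_pos hd (lt_of_not_ge fun he => ?_)
    rw [sub_mul_sub_pos_iff _ hxy] at ha
    rw [sub_mul_sub_neg_iff _ hxy] at hd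
    rw [sub_mul_sub_nonneg_iff _ hxy] at hb
    rw [sub_mul_sub_nonpos_iff _ hxy] at he
    rcases mul_neg_iff.mp hlink with ⟨h1, h2⟩ | ⟨h2, h1⟩ <;>
      rcases sub_mul_sub_pos_cases h1 with h1 | h1 <;>
      rcases sub_mul_sub_neg_cases h2 with h2 | h2 <;>
      rcases ha with ha | ha <;> rcases hb with hb | hb <;> linarith
  · have hb := nonpos_of_mul_nonneg_right hab ha
    refine mul_neg_of_pos_of_neg hd (lt_of_not_ge fun he => ?_)
    rw [sub_mul_sub_neg_iff _ hxy] at ha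
    rw [sub_mul_sub_pos_iff _ hxy] at hd
    rw [sub_mul_sub_nonpos_iff _ hxy] at hb
    rw [sub_mul_sub_nonneg_iff _ hxy] at he
    rcases mul_neg_iff.mp hlink with ⟨h1, h2⟩ | ⟨h2, h1⟩ <;>
      rcases sub_mul_sub_pos_cases h1 with h1 | h1 <;>
      rcases sub_mul_sub_neg_cases h2 with h2 | h2 <;>
      rcases hd with hd | hd <;> rcases he with he | he <;> linarith

lemma pairProd_nonneg_of_transpose {a b c d e : ℝ} (h02 : 0 ≤ pairProd a b c d)
    (h13 : 0 ≤ pairProd b c d e) (h03 : pairProd a b d e < 0) :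
    0 ≤ pairProd a d c b ∧ 0 ≤ pairProd d c b e ∧ 0 ≤ pairProd a d b e := by
  refine ⟨le_of_not_gt fun h => ?_, le_of_not_gt fun h => ?_, (pairProd_pos_of_neg h03).le⟩
  · have := pairProd_neg_of_linked (a := d) (b := e) (d := a) (e := b) (x := b) (y := c)
      (by rwa [pairProd_comm]) (by rwa [pairProd_comm])
      (by rwa [pairProd_swap_left, pairProd_swap_right])
    simp [pairProd] at this
  · have := pairProd_neg_of_linked (a := d) (b := c) (d := e) (e := b) (x := a) (y := b)
      (by rwa [pairProd_swap_right]) (by rwa [pairProd_comm, pairProd_swap_right])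
      (by rwa [pairProd_comm])
    simp [pairProd] at this

def negChords (n : ℕ) [NeZero n] (z : ZMod n → ℝ) : Set (Sym2 (ZMod n)) :=
  {e | e ∈ chords n ∧ u z e < 0}

section Chords

variable {n : ℕ}

lemma u_mk_neg_iff (z : ZMod n → ℝ) (i j : ZMod n) :
    u z s(i, j) < 0 ↔ pairProd (z i) (z (i + 1)) (z j) (z (j + 1)) < 0 := by
  have key : pairProd (z i) (z (i + 1)) (z j) (z (j + 1)) =
      (z i - z (j + 1)) * (z (i + 1) - z j) * ((z i - z j) * (z (i + 1) - z (j + 1))) := by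
    unfold pairProd; ring
  rw [key, u, Sym2.lift_mk]
  exact div_neg_iff.trans mul_neg_iff.symm

lemma u_mk_neg_iff_of_edges {z z' : ZMod n → ℝ} {i j k l : ZMod n}
    (hi : s(z' i, z' (i + 1)) = s(z k, z (k + 1))) (hj : s(z' j, z' (j + 1)) = s(z l, z (l + 1))) :
    u z' s(i, j) < 0 ↔ u z s(k, l) < 0 := by
  rw [u_mk_neg_iff, u_mk_neg_iff, pairProd_congr hi hj]

lemma natCast_ne_zero_of_lt {k : ℕ} (hk : 0 < k) (hkn : k < n) : (k : ZMod n) ≠ 0 := by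
  rw [Ne, ZMod.natCast_eq_zero_iff]
  exact Nat.not_dvd_of_pos_of_lt hk hkn

lemma one_two_three_four_ne_zero (hn : 5 ≤ n) :
    (1 : ZMod n) ≠ 0 ∧ (2 : ZMod n) ≠ 0 ∧ (3 : ZMod n) ≠ 0 ∧ (4 : ZMod n) ≠ 0 :=
  ⟨by exact_mod_cast natCast_ne_zero_of_lt (k := 1) (by norm_num) (by omega),
    by exact_mod_cast natCast_ne_zero_of_lt (k := 2) (by norm_num) (by omega),
    by exact_mod_cast natCast_ne_zero_of_lt (k := 3) (by norm_num) (by omega),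
    by exact_mod_cast natCast_ne_zero_of_lt (k := 4) (by norm_num) (by omega)⟩

variable [NeZero n]

lemma mk_mem_chords_iff {i j : ZMod n} :
    s(i, j) ∈ chords n ↔ j ≠ i - 1 ∧ j ≠ i ∧ j ≠ i + 1 := by
  simp only [chords, Finset.mem_filter, Finset.mem_univ, true_and, IsChord]
  refine ⟨fun h => h i j rfl, fun h i' j' he => ?_⟩
  rcases Sym2.eq_iff.mp he with ⟨rfl, rfl⟩ | ⟨rfl, rfl⟩
  · exact h
  · refine ⟨?_, ?_, ?_⟩ <;> grind

lemma mk_add_two_mem_chords (hn : 4 ≤ n) (i : ZMod n) : s(i, i + 2) ∈ chords n := by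
  have h1 : ((1 : ℕ) : ZMod n) ≠ 0 := natCast_ne_zero_of_lt (by norm_num) (by omega)
  have h2 : ((2 : ℕ) : ZMod n) ≠ 0 := natCast_ne_zero_of_lt (by norm_num) (by omega)
  have h3 : ((3 : ℕ) : ZMod n) ≠ 0 := natCast_ne_zero_of_lt (by norm_num) (by omega)
  push_cast at h1 h2 h3
  refine mk_mem_chords_iff.mpr ⟨fun h => h3 ?_, fun h => h2 ?_, fun h => h1 ?_⟩ <;>
    linear_combination h

lemma chordLength_mk_add_two (hn : 4 ≤ n) (i : ZMod n) : chordLength n s(i, i + 2) = 2 := by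
  have h2 : (2 : ZMod n).val = 2 := by rw [ZMod.val_two_eq_two_mod, Nat.mod_eq_of_lt (by omega)]
  have h2' : (2 : ZMod n) ≠ 0 := fun h => by simp [h] at h2
  simp only [chordLength, Sym2.lift_mk, add_sub_cancel_left, sub_add_cancel_left, ZMod.neg_val,
    h2', if_false, h2]
  omega

end Chords

section SwapOneThree

open Equiv

variable {n : ℕ}

lemma comp_swap_one_three_apply (hn : 5 ≤ n) (z : ZMod n → ℝ) :
    (z ∘ swap 1 3) 0 = z 0 ∧ (z ∘ swap 1 3) 1 = z 3 ∧ (z ∘ swap 1 3) 2 = z 2 ∧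
      (z ∘ swap 1 3) 3 = z 1 ∧ (z ∘ swap 1 3) 4 = z 4 := by
  obtain ⟨h1, -, h3, -⟩ := one_two_three_four_ne_zero hn
  simp only [Function.comp_apply, swap_apply_left, swap_apply_right, true_and]
  refine ⟨?_, ?_, ?_⟩ <;> rw [swap_apply_of_ne_of_ne]
  exacts [h1.symm, h3.symm, fun h => h1 (by linear_combination h),
    fun h => h1 (by linear_combination -h), fun h => h3 (by linear_combination h),
    fun h => h1 (by linear_combination h)]

lemma comp_swap_apply_of_ne (z : ZMod n → ℝ) {j : ZMod n} (h0 : j ≠ 0) (h1 : j ≠ 1) (h2 : j ≠ 2)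
    (h3 : j ≠ 3) : (z ∘ swap 1 3) j = z j ∧ (z ∘ swap 1 3) (j + 1) = z (j + 1) := by
  simp only [Function.comp_apply]
  rw [swap_apply_of_ne_of_ne h1 h3, swap_apply_of_ne_of_ne (fun h => h0 (by linear_combination h))
    (fun h => h2 (by linear_combination h))]
  exact ⟨rfl, rfl⟩

lemma mk_comp_swap_eq (hn : 5 ≤ n) (z : ZMod n → ℝ) {k : ZMod n} (h0 : k ≠ 0) (h3 : k ≠ 3) :
    s((z ∘ swap 1 3) k, (z ∘ swap 1 3) (k + 1)) = s(z (swap 1 2 k), z (swap 1 2 k + 1)) := by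
  obtain ⟨-, w1, w2, w3, -⟩ := comp_swap_one_three_apply hn z
  by_cases h1 : k = 1
  · subst h1
    rw [swap_apply_left, one_add_one_eq_two, w1, w2, show (2 : ZMod n) + 1 = 3 by norm_num]
    exact Sym2.eq_swap
  by_cases h2 : k = 2
  · subst h2
    rw [swap_apply_right, one_add_one_eq_two, w2, show (2 : ZMod n) + 1 = 3 by norm_num, w3]
    exact Sym2.eq_swap
  obtain ⟨hk, hk1⟩ := comp_swap_apply_of_ne z h0 h1 h2 h3
  rw [hk, hk1, swap_apply_of_ne_of_ne h1 h2]

lemma not_neg_comp_swap_of_short (hn : 5 ≤ n) {z : ZMod n → ℝ} (h02 : ¬u z s(0, 2) < 0)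
    (h13 : ¬u z s(1, 3) < 0) (h03 : u z s(0, 3) < 0) :
    ¬u (z ∘ swap 1 3) s(0, 2) < 0 ∧ ¬u (z ∘ swap 1 3) s(1, 3) < 0 ∧
      ¬u (z ∘ swap 1 3) s(0, 3) < 0 := by
  obtain ⟨w0, w1, w2, w3, w4⟩ := comp_swap_one_three_apply hn z
  simp only [u_mk_neg_iff, not_lt, zero_add, one_add_one_eq_two,
    show (2 : ZMod n) + 1 = 3 by norm_num, show (3 : ZMod n) + 1 = 4 by norm_num] at *
  rw [w0, w1, w2, w3, w4]
  exact pairProd_nonneg_of_transpose h02 h13 h03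

variable [NeZero n]

lemma mk_swap_mem_chords {i j : ZMod n} (h : s(i, j) ∈ chords n) (hi0 : i ≠ 0) (hi3 : i ≠ 3)
    (hj0 : j ≠ 0) (hj3 : j ≠ 3) : s(swap 1 2 i, swap 1 2 j) ∈ chords n := by
  rw [mk_mem_chords_iff] at h ⊢
  simp only [swap_apply_def]
  split_ifs <;> grind

lemma neg_mk_three_of_neg_mk_zero (hn : 5 ≤ n) {z : ZMod n → ℝ}
    (hlink : pairProd (z 0) (z 1) (z 3) (z 4) < 0) (hw02 : ¬u (z ∘ swap 1 3) s(0, 2) < 0)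
    (hw03 : ¬u (z ∘ swap 1 3) s(0, 3) < 0) {j : ZMod n} (hj : s(0, j) ∈ chords n)
    (hw : u (z ∘ swap 1 3) s(0, j) < 0) (hz : ¬u z s(0, j) < 0) :
    s(3, j) ∈ chords n ∧ u z s(3, j) < 0 ∧ ¬u (z ∘ swap 1 3) s(3, j) < 0 := by
  obtain ⟨-, hj0, hj1⟩ := mk_mem_chords_iff.mp hj
  rw [zero_add] at hj1
  have hj2 : j ≠ 2 := by rintro rfl; exact hw02 hw
  have hj3 : j ≠ 3 := by rintro rfl; exact hw03 hw
  obtain ⟨w0, w1, -, w3, w4⟩ := comp_swap_one_three_apply hn z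
  obtain ⟨wj, wj1⟩ := comp_swap_apply_of_ne z hj0 hj1 hj2 hj3
  rw [u_mk_neg_iff, zero_add, w0, w1, wj, wj1] at hw
  rw [u_mk_neg_iff, zero_add, not_lt] at hz
  have hde := pairProd_neg_of_linked hlink hz hw
  have hj4 : j ≠ 4 := by rintro rfl; simp [pairProd] at hde
  refine ⟨mk_mem_chords_iff.mpr ⟨?_, hj3, ?_⟩, ?_, ?_⟩
  · rwa [show (3 : ZMod n) - 1 = 2 by norm_num]
  · rwa [show (3 : ZMod n) + 1 = 4 by norm_num]
  · rwa [u_mk_neg_iff, show (3 : ZMod n) + 1 = 4 by norm_num]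
  · rw [u_mk_neg_iff, show (3 : ZMod n) + 1 = 4 by norm_num, w3, w4, wj, wj1, not_lt]
    exact pairProd_nonneg_of_neg_of_neg hz hw hde

lemma neg_mk_zero_of_neg_mk_three (hn : 5 ≤ n) {z : ZMod n → ℝ}
    (hlink : pairProd (z 0) (z 1) (z 3) (z 4) < 0) (hw03 : ¬u (z ∘ swap 1 3) s(0, 3) < 0)
    (hw13 : ¬u (z ∘ swap 1 3) s(1, 3) < 0) {j : ZMod n} (hj : s(3, j) ∈ chords n)
    (hw : u (z ∘ swap 1 3) s(3, j) < 0) (hz : ¬u z s(3, j) < 0) :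
    s(0, j) ∈ chords n ∧ u z s(0, j) < 0 ∧ ¬u (z ∘ swap 1 3) s(0, j) < 0 := by
  obtain ⟨hj2, hj3, hj4⟩ := mk_mem_chords_iff.mp hj
  rw [show (3 : ZMod n) - 1 = 2 by norm_num] at hj2
  rw [show (3 : ZMod n) + 1 = 4 by norm_num] at hj4
  have hj0 : j ≠ 0 := by rintro rfl; rw [Sym2.eq_swap] at hw; exact hw03 hw
  have hj1 : j ≠ 1 := by rintro rfl; rw [Sym2.eq_swap] at hw; exact hw13 hw
  obtain ⟨w0, w1, -, w3, w4⟩ := comp_swap_one_three_apply hn z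
  obtain ⟨wj, wj1⟩ := comp_swap_apply_of_ne z hj0 hj1 hj2 hj3
  rw [u_mk_neg_iff, show (3 : ZMod n) + 1 = 4 by norm_num, w3, w4, wj, wj1,
    pairProd_swap_left] at hw
  rw [u_mk_neg_iff, show (3 : ZMod n) + 1 = 4 by norm_num, not_lt, pairProd_swap_left] at hz
  rw [pairProd_comm, pairProd_swap_left, pairProd_swap_right] at hlink
  have hba := pairProd_neg_of_linked hlink hz hw
  have hjm1 : j ≠ -1 := by rintro rfl; simp [pairProd] at hba
  refine ⟨mk_mem_chords_iff.mpr ⟨by rwa [zero_sub], hj0, by rwa [zero_add]⟩, ?_, ?_⟩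
  · rwa [u_mk_neg_iff, zero_add, pairProd_swap_left]
  · rw [u_mk_neg_iff, zero_add, w0, w1, wj, wj1, not_lt, pairProd_swap_left]
    exact pairProd_nonneg_of_neg_of_neg hz hw hba

lemma map_swap_of_neg_of_not_neg (hn : 5 ≤ n) {z : ZMod n → ℝ}
    (hlink : pairProd (z 0) (z 1) (z 3) (z 4) < 0) (hw02 : ¬u (z ∘ swap 1 3) s(0, 2) < 0)
    (hw13 : ¬u (z ∘ swap 1 3) s(1, 3) < 0) (hw03 : ¬u (z ∘ swap 1 3) s(0, 3) < 0)
    {e : Sym2 (ZMod n)} (he : e ∈ chords n) (hT : 0 ∈ e ∨ 3 ∈ e)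
    (hw : u (z ∘ swap 1 3) e < 0) (hz : ¬u z e < 0) :
    e.map (swap 0 3) ∈ chords n ∧ u z (e.map (swap 0 3)) < 0 ∧
      ¬u (z ∘ swap 1 3) (e.map (swap 0 3)) < 0 := by
  rcases hT with h | h <;> obtain ⟨j, rfl⟩ := Sym2.mem_iff_exists.mp h
  · have hj0 : j ≠ 0 := (mk_mem_chords_iff.mp he).2.1
    have hj3 : j ≠ 3 := by rintro rfl; exact hw03 hw
    rw [Sym2.map_mk, swap_apply_left, swap_apply_of_ne_of_ne hj0 hj3]
    exact neg_mk_three_of_neg_mk_zero hn hlink hw02 hw03 he hw hz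
  · have hj3 : j ≠ 3 := (mk_mem_chords_iff.mp he).2.1
    have hj0 : j ≠ 0 := by rintro rfl; rw [Sym2.eq_swap] at hw; exact hw03 hw
    rw [Sym2.map_mk, swap_apply_right, swap_apply_of_ne_of_ne hj0 hj3]
    exact neg_mk_zero_of_neg_mk_three hn hlink hw03 hw13 he hw hz

lemma ncard_negChords_comp_swap_sdiff_le (hn : 5 ≤ n) (z : ZMod n → ℝ) :
    (negChords n (z ∘ swap 1 3) \ {e | 0 ∈ e ∨ 3 ∈ e}).ncard ≤
      (negChords n z \ {e | 0 ∈ e ∨ 3 ∈ e}).ncard := by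
  obtain ⟨h1, h2, -, -⟩ := one_two_three_four_ne_zero hn
  have f0 : swap (1 : ZMod n) 2 0 = 0 := swap_apply_of_ne_of_ne h1.symm h2.symm
  have f3 : swap (1 : ZMod n) 2 3 = 3 := swap_apply_of_ne_of_ne
    (fun h => h2 (by linear_combination h)) (fun h => h1 (by linear_combination h))
  refine Set.ncard_le_ncard_of_injOn (Sym2.map (swap 1 2)) ?_
    (Sym2.map.injective (swap 1 2).injective).injOn
  rintro e ⟨⟨he, hw⟩, hT⟩
  induction e using Sym2.ind with
  | _ i j =>
    simp only [Set.mem_ofPred_eq, Sym2.mem_iff, not_or, @eq_comm _ (0 : ZMod n),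
      @eq_comm _ (3 : ZMod n)] at hT
    obtain ⟨⟨hi0, hj0⟩, hi3, hj3⟩ := hT
    rw [Sym2.map_mk]
    refine ⟨⟨mk_swap_mem_chords he hi0 hi3 hj0 hj3, (u_mk_neg_iff_of_edges
      (mk_comp_swap_eq hn z hi0 hi3) (mk_comp_swap_eq hn z hj0 hj3)).mp hw⟩, ?_⟩
    simp only [Set.mem_ofPred_eq, Sym2.mem_iff, not_or, @eq_comm _ (0 : ZMod n),
      @eq_comm _ (3 : ZMod n)]
    rw [← f0, ← f3]
    simp only [(swap (1 : ZMod n) 2).injective.eq_iff]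
    exact ⟨⟨hi0, hj0⟩, hi3, hj3⟩

lemma ncard_negChords_comp_swap_inter_lt (hn : 5 ≤ n) {z : ZMod n → ℝ}
    (h03 : u z s(0, 3) < 0) (hw02 : ¬u (z ∘ swap 1 3) s(0, 2) < 0)
    (hw13 : ¬u (z ∘ swap 1 3) s(1, 3) < 0) (hw03 : ¬u (z ∘ swap 1 3) s(0, 3) < 0) :
    (negChords n (z ∘ swap 1 3) ∩ {e | 0 ∈ e ∨ 3 ∈ e}).ncard <
      (negChords n z ∩ {e | 0 ∈ e ∨ 3 ∈ e}).ncard := by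
  obtain ⟨-, h2, h3, h4⟩ := one_two_three_four_ne_zero hn
  have hmem : s(0, 3) ∈ negChords n z ∩ {e | 0 ∈ e ∨ 3 ∈ e} :=
    ⟨⟨mk_mem_chords_iff.mpr ⟨fun h => h4 (by linear_combination h), h3,
      fun h => h2 (by linear_combination h)⟩, h03⟩, .inl (Sym2.mem_mk_left _ _)⟩
  have hlink : pairProd (z 0) (z 1) (z 3) (z 4) < 0 := by
    rwa [u_mk_neg_iff, zero_add, show (3 : ZMod n) + 1 = 4 by norm_num] at h03
  have hmap e (he : e ∈ negChords n (z ∘ swap 1 3) ∩ {e | 0 ∈ e ∨ 3 ∈ e}) :=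
    map_swap_of_neg_of_not_neg hn hlink hw02 hw13 hw03 he.1.1 he.2 he.1.2
  refine lt_of_le_of_lt (Set.ncard_le_ncard_of_injOn
    (fun e => if u z e < 0 then e else e.map (swap 0 3)) ?_ ?_)
    (Set.ncard_sdiff_singleton_lt_of_mem hmem)
  · intro e he
    by_cases hz : u z e < 0
    · simp only [if_pos hz]
      refine ⟨⟨⟨he.1.1, hz⟩, he.2⟩, ?_⟩
      rintro rfl
      exact hw03 he.1.2
    · simp only [if_neg hz]
      obtain ⟨hc, hzn, -⟩ := hmap e he hz
      refine ⟨⟨⟨hc, hzn⟩, he.2.symm.imp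
        (fun h => Sym2.mem_map.mpr ⟨3, h, swap_apply_right _ _⟩)
        (fun h => Sym2.mem_map.mpr ⟨0, h, swap_apply_left _ _⟩)⟩, fun h => hw03 ?_⟩
      have hfix : s((0 : ZMod n), 3).map (swap 0 3) = s(0, 3) := by
        rw [Sym2.map_mk, swap_apply_left, swap_apply_right, Sym2.eq_swap]
      rw [← Sym2.map.injective (swap 0 3).injective (h.trans hfix.symm)]
      exact he.1.2
  · intro e₁ he₁ e₂ he₂ h
    by_cases hz₁ : u z e₁ < 0 <;> by_cases hz₂ : u z e₂ < 0 <;>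
      simp only [if_pos, if_neg, hz₁, hz₂, not_false_eq_true] at h
    · exact h
    · exact absurd (h ▸ he₁.1.2) (hmap e₂ he₂ hz₂).2.2
    · exact absurd (h ▸ he₂.1.2) (hmap e₁ he₁ hz₁).2.2
    · exact Sym2.map.injective (swap 0 3).injective h

lemma negCount_comp_swap_lt (hn : 5 ≤ n) {z : ZMod n → ℝ} (h02 : ¬u z s(0, 2) < 0)
    (h13 : ¬u z s(1, 3) < 0) (h03 : u z s(0, 3) < 0) :
    negCount n (z ∘ swap 1 3) < negCount n z := by
  obtain ⟨hw02, hw13, hw03⟩ := not_neg_comp_swap_of_short hn h02 h13 h03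
  have htouch := ncard_negChords_comp_swap_inter_lt hn h03 hw02 hw13 hw03
  have hrest := ncard_negChords_comp_swap_sdiff_le hn z
  change (negChords n _).ncard < (negChords n z).ncard
  rw [← Set.ncard_inter_add_ncard_sdiff_eq_ncard (negChords n _) {e | 0 ∈ e ∨ 3 ∈ e},
    ← Set.ncard_inter_add_ncard_sdiff_eq_ncard (negChords n z) {e | 0 ∈ e ∨ 3 ∈ e}]
  omega

end SwapOneThree

theorem swap_decreases_neg_length_three_general (n : ℕ) [NeZero n] (hn : 6 ≤ n) (z : ZMod n → ℝ)
    (hpos : ∀ e ∈ chords n, chordLength n e = 2 → 0 < u z e)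
    (hneg : u z s((0 : ZMod n), (3 : ZMod n)) < 0) :
    negCount n (fun k => z (Equiv.swap (1 : ZMod n) (3 : ZMod n) k)) < negCount n z := by
  have hshort (i : ZMod n) : ¬u z s(i, i + 2) < 0 :=
    (hpos _ (mk_add_two_mem_chords (by omega) i) (chordLength_mk_add_two (by omega) i)).not_gt
  have h02 := hshort 0
  have h13 := hshort 1
  rw [zero_add] at h02
  rw [show (1 : ZMod n) + 2 = 3 by norm_num] at h13
  exact negCount_comp_swap_lt (by omega) h02 h13 hneg

/-- For `n ≥ 6` and injective `z : ZMod n → ℝ` with all length-2 chords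
positive and `u_{0,3}(z) < 0`, swapping the labels `1` and `3` strictly decreases the
number of negative chords. -/
theorem swap_decreases_neg_length_three (n : ℕ) [NeZero n] (hn : 6 ≤ n) (z : ZMod n → ℝ)
    (hz : Function.Injective z)
    (hpos : ∀ e ∈ chords n, chordLength n e = 2 → 0 < u z e)
    (hneg : u z s((0 : ZMod n), (3 : ZMod n)) < 0) :
    negCount n (fun k => z (Equiv.swap (1 : ZMod n) (3 : ZMod n) k)) < negCount n z :=
  swap_decreases_neg_length_three_general n hn z hpos hneg

end M0n
end

section
/- Let n and ℓ be integers with 4 ≤ ℓ ≤ n−2, let z : ZMod n → ℝ be injective, and let τ ∈ Perm(ZMod n) be the transposition exchanging 1 and ℓ. Then the following identity holds: u_{{1,ℓ−1}}(z ∘ τ) = − u_{{1,ℓ−1}}(z) · ∏_{e ∈ E, e crosses {1,ℓ−1}} u_e(z)^{−1}, where the product is over all chords crossing {1, ℓ−1}, i.e. all chords {k,j} with k ∈ {ℓ, ℓ+1, …, n−1, 0} and j ∈ {2, …, ℓ−2}. (This is the row v_{ℓ−1 ℓ} ↦ −u_{1 ℓ−1} ∏_{kj ≁ 1 ℓ−1}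 u_{kj}^{−1} of the monomial map φ_{(1ℓ)}.) -/
/-!
Write `u_{kj}⁻¹ = (z_k - z_j)(z_{k+1} - z_{j+1}) / ((z_k - z_{j+1})(z_{k+1} - z_j))`. The chords
crossing `{i, m}` (with `i < m`) are the `{k, j}` with `k = m+1, …, n+i-1` (read mod `n`) and
`j = i+1, …, m-1`, so the product of their `u⁻¹` telescopes in `j` and then in `k` to the single
cross-ratio `(z_{m+1} - z_{i+1})(z_i - z_m) / ((z_{m+1} - z_m)(z_i - z_{i+1}))`. For `i = 1`,
`m = ℓ-1` the claim becomes an identity of rational functions in `z_1, z_2, z_{ℓ-1}, z_ℓ`, since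
the transposition `(1 ℓ)` only permutes the four points entering `u_{1,ℓ-1}`.
-/

namespace M0n

open Finset

section Telescoping

variable {K : Type*} [Field K]

theorem prod_Ico_div_of_ne_zero (f : ℕ → K) {m n : ℕ} (hmn : m ≤ n)
    (hf : ∀ k ∈ Icc m n, f k ≠ 0) : ∏ k ∈ Ico m n, f (k + 1) / f k = f n / f m := by
  induction n, hmn using Nat.le_induction with
  | base => simp [div_self (hf m (by simp))]
  | succ n hmn ih =>
    rw [prod_Ico_succ_top hmn, ih fun k hk => hf k (by simp at hk ⊢; omega), mul_comm,
      div_mul_div_cancel₀ (hf n (by simp; omega))]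

theorem prod_Ico_prod_Ico_div_of_ne_zero (F : ℕ → ℕ → K) {a b c d : ℕ} (hab : a ≤ b)
    (hcd : c ≤ d) (hF : ∀ k ∈ Icc a b, ∀ j ∈ Icc c d, F k j ≠ 0) :
    ∏ k ∈ Ico a b, ∏ j ∈ Ico c d, F k j * F (k + 1) (j + 1) / (F k (j + 1) * F (k + 1) j)
      = F a c * F b d / (F a d * F b c) := by
  have hrow : ∀ k ∈ Ico a b,
      ∏ j ∈ Ico c d, F k j * F (k + 1) (j + 1) / (F k (j + 1) * F (k + 1) j)
        = (F (k + 1) d / F (k + 1) c) / (F k d / F k c) := by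
    intro k hk
    simp only [mem_Ico] at hk
    have hk₀ : ∀ j ∈ Icc c d, F k j ≠ 0 := hF k (by simp; omega)
    have hk₁ : ∀ j ∈ Icc c d, F (k + 1) j ≠ 0 := hF (k + 1) (by simp; omega)
    calc _ = ∏ j ∈ Ico c d, (F (k + 1) (j + 1) / F k (j + 1)) / (F (k + 1) j / F k j) := by
          refine prod_congr rfl fun j hj => ?_
          simp only [mem_Ico] at hj
          have := hk₀ j (by simp; omega)
          field_simp
      _ = (F (k + 1) d / F k d) / (F (k + 1) c / F k c) :=
          prod_Ico_div_of_ne_zero (fun j => F (k + 1) j / F k j) hcd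
            fun j hj => div_ne_zero (hk₁ j hj) (hk₀ j hj)
      _ = _ := div_div_div_comm ..
  have hc : ∀ k ∈ Icc a b, F k c ≠ 0 := fun k hk => hF k hk c (by simp [hcd])
  rw [prod_congr rfl hrow, prod_Ico_div_of_ne_zero (fun k => F k d / F k c) hab
    fun k hk => div_ne_zero (hF k hk d (by simp [hcd])) (hc k hk)]
  have := hc a (by simp [hab])
  have := hc b (by simp [hab])
  field_simp

end Telescoping

section Chords

variable {n : ℕ}

theorem natCast_ne_natCast_of_lt_of_lt_add {j k : ℕ} (hjk : j < k) (hkj : k < j + n) :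
    (j : ZMod n) ≠ k := by
  rw [Ne, ZMod.natCast_eq_natCast_iff, Nat.modEq_iff_dvd' hjk.le]
  exact fun hdvd => absurd (Nat.le_of_dvd (by omega) hdvd) (by omega)

theorem eq_of_natCast_eq_of_lt_add {j k : ℕ} (h : (j : ZMod n) = k) (hjk : j < k + n)
    (hkj : k < j + n) : j = k := by
  by_contra hne
  rcases Nat.lt_or_gt_of_ne hne with hlt | hlt
  · exact natCast_ne_natCast_of_lt_of_lt_add hlt hkj h
  · exact natCast_ne_natCast_of_lt_of_lt_add hlt hjk h.symm

theorem val_sub_of_lt [NeZero n] {a b : ZMod n} (h : a.val < b.val) :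
    (a - b).val = a.val + n - b.val := by
  rcases lt_or_ge ((a - b).val + b.val) n with hlt | hle
  · have := ZMod.val_add_of_lt hlt
    rw [sub_add_cancel] at this
    omega
  · have := ZMod.val_add_of_le hle
    rw [sub_add_cancel] at this
    omega

theorem val_natCast_of_le_of_lt [NeZero n] {k : ℕ} (h₁ : n ≤ k) (h₂ : k < 2 * n) :
    (k : ZMod n).val = k - n := by
  rw [ZMod.val_natCast, Nat.mod_eq_sub_mod h₁, Nat.mod_eq_of_lt (by omega)]

theorem cycBtw_iff_of_val_le [NeZero n] {a b x : ZMod n} (h : a.val ≤ b.val) :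
    CycBtw a x b ↔ a.val < x.val ∧ x.val < b.val := by
  unfold CycBtw
  rw [ZMod.val_sub h]
  rcases le_or_gt a.val x.val with hx | hx
  · rw [ZMod.val_sub hx]; omega
  · rw [val_sub_of_lt hx]; have := b.val_lt; omega

theorem cycBtw_iff_of_val_lt [NeZero n] {a b x : ZMod n} (h : b.val < a.val) :
    CycBtw a x b ↔ a.val < x.val ∨ x.val < b.val := by
  unfold CycBtw
  rw [val_sub_of_lt h]
  rcases le_or_gt a.val x.val with hx | hx
  · rw [ZMod.val_sub hx]; have := x.val_lt; omega
  · rw [val_sub_of_lt hx]; have := a.val_lt; omega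

theorem crosses_mk_iff {a b k l : ZMod n} :
    Crosses n s(a, b) s(k, l) ↔
      Xor (CycBtw a k b) (CycBtw a l b) ∧ Xor (CycBtw b k a) (CycBtw b l a) := by
  refine ⟨fun h => ⟨h a b k l rfl rfl, h b a k l Sym2.eq_swap rfl⟩, ?_⟩
  rintro ⟨hab, hba⟩ i j k' l' hp hq
  rw [Sym2.eq_iff] at hp hq
  rcases hp with ⟨rfl, rfl⟩ | ⟨rfl, rfl⟩ <;> rcases hq with ⟨rfl, rfl⟩ | ⟨rfl, rfl⟩ <;>
    first | assumption | rwa [xor_comm]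

theorem crosses_iff_of_val_lt [NeZero n] {i j a b : ZMod n} (hij : i.val < j.val) :
    Crosses n s(a, b) s(i, j) ↔
      (i.val < a.val ∧ a.val < j.val ∧ (b.val < i.val ∨ j.val < b.val)) ∨
        (i.val < b.val ∧ b.val < j.val ∧ (a.val < i.val ∨ j.val < a.val)) := by
  rw [crosses_mk_iff]
  rcases lt_trichotomy a.val b.val with h | h | h
  · simp only [cycBtw_iff_of_val_le h.le, cycBtw_iff_of_val_lt h, xor_iff_or_and_not_and]
    omega
  · simp only [cycBtw_iff_of_val_le h.le, cycBtw_iff_of_val_le h.ge, xor_iff_or_and_not_and]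
    omega
  · simp only [cycBtw_iff_of_val_le h.le, cycBtw_iff_of_val_lt h, xor_iff_or_and_not_and]
    omega

theorem isChord_mk_iff {a b : ZMod n} :
    IsChord n s(a, b) ↔ b ≠ a - 1 ∧ b ≠ a ∧ b ≠ a + 1 := by
  refine ⟨fun h => h a b rfl, ?_⟩
  rintro ⟨h₁, h₂, h₃⟩ i j hp
  rw [Sym2.eq_iff] at hp
  rcases hp with ⟨rfl, rfl⟩ | ⟨rfl, rfl⟩
  · exact ⟨h₁, h₂, h₃⟩
  · refine ⟨fun h => h₃ ?_, Ne.symm h₂, fun h => h₁ ?_⟩ <;> rw [h] <;> ring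

theorem isChord_natCast {j k : ℕ} (h₁ : j + 1 < k) (h₂ : k + 1 < j + n) :
    IsChord n s((k : ZMod n), (j : ZMod n)) := by
  have hne {a b : ℕ} (hab : a < b) (hba : b < a + n) : (a : ZMod n) ≠ b :=
    natCast_ne_natCast_of_lt_of_lt_add hab hba
  refine isChord_mk_iff.2 ⟨fun h => ?_, hne (by omega) (by omega), fun h => ?_⟩
  · exact hne (a := j + 1) (b := k) (by omega) (by omega) (by push_cast; rw [h]; ring)
  · exact hne (a := j) (b := k + 1) (by omega) (by omega) (by push_cast; exact h)

theorem filter_crosses_eq_image [NeZero n] {i m : ℕ} (him : i < m) (hmn : m < n) :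
    (chords n).filter (fun e => Crosses n e s((i : ZMod n), (m : ZMod n)))
      = (Ico (m + 1) (n + i) ×ˢ Ico (i + 1) m).image
          fun p : ℕ × ℕ => s((p.1 : ZMod n), (p.2 : ZMod n)) := by
  have hi : (i : ZMod n).val = i := ZMod.val_cast_of_lt (by omega)
  have hm : (m : ZMod n).val = m := ZMod.val_cast_of_lt hmn
  have crosses_iff (a b : ZMod n) : Crosses n s(a, b) s((i : ZMod n), (m : ZMod n)) ↔
      (i < a.val ∧ a.val < m ∧ (b.val < i ∨ m < b.val)) ∨
        (i < b.val ∧ b.val < m ∧ (a.val < i ∨ m < a.val)) := by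
    rw [crosses_iff_of_val_lt (by omega), hi, hm]
  have mem_image_of_val {a b : ZMod n} (ha : i < a.val ∧ a.val < m)
      (hb : b.val < i ∨ m < b.val) :
      s(b, a) ∈ (Ico (m + 1) (n + i) ×ˢ Ico (i + 1) m).image
        fun p : ℕ × ℕ => s((p.1 : ZMod n), (p.2 : ZMod n)) := by
    have := b.val_lt
    refine mem_image.2 ⟨(if b.val < i then b.val + n else b.val, a.val), ?_, ?_⟩
    · simp only [mem_product, mem_Ico]
      split_ifs <;> omega
    · split_ifs <;> simp
  ext e
  constructor
  · induction e using Sym2.ind with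
    | _ a b =>
      rw [mem_filter, crosses_iff]
      rintro ⟨-, ⟨ha, hb⟩ | ⟨hb, ha⟩⟩
      · rw [Sym2.eq_swap]
        exact mem_image_of_val ⟨ha, hb.1⟩ hb.2
      · exact mem_image_of_val ⟨hb, ha.1⟩ ha.2
  · simp only [mem_image, mem_product, mem_Ico]
    rintro ⟨⟨k, j⟩, ⟨⟨hk₁, hk₂⟩, hj₁, hj₂⟩, rfl⟩
    dsimp only at *
    have hj : (j : ZMod n).val = j := ZMod.val_cast_of_lt (by omega)
    have hk : (k : ZMod n).val < i ∨ m < (k : ZMod n).val := by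
      rcases lt_or_ge k n with hkn | hkn
      · rw [ZMod.val_cast_of_lt hkn]; omega
      · rw [val_natCast_of_le_of_lt hkn (by omega)]; omega
    refine mem_filter.2 ⟨mem_filter.2 ⟨mem_univ _, isChord_natCast (by omega) (by omega)⟩, ?_⟩
    rw [crosses_iff, hj]
    omega

theorem injOn_mk_natCast {i m : ℕ} :
    Set.InjOn (fun p : ℕ × ℕ => s((p.1 : ZMod n), (p.2 : ZMod n)))
      ↑(Ico (m + 1) (n + i) ×ˢ Ico (i + 1) m) := by
  rintro ⟨k, j⟩ hp ⟨k', j'⟩ hq h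
  simp only [coe_product, Set.mem_prod, coe_Ico, Set.mem_Ico] at hp hq
  dsimp only at h
  rcases Sym2.eq_iff.1 h with ⟨hk, hj⟩ | ⟨hk, -⟩
  · rw [eq_of_natCast_eq_of_lt_add hk (by omega) (by omega),
      eq_of_natCast_eq_of_lt_add hj (by omega) (by omega)]
  · exact absurd (eq_of_natCast_eq_of_lt_add hk (by omega) (by omega)) (by omega)

theorem inv_u_mk {K : Type*} [Field K] (z : ZMod n → K) (a b : ZMod n) :
    (u z s(a, b))⁻¹
      = (z a - z b) * (z (a + 1) - z (b + 1)) / ((z a - z (b + 1)) * (z (a + 1) - z b)) :=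
  inv_div _ _

theorem prod_inv_u_crosses [NeZero n] {K : Type*} [Field K] {z : ZMod n → K}
    (hz : Function.Injective z) {i m : ℕ} (him : i < m) (hmn : m < n) :
    ∏ e ∈ (chords n).filter (fun e => Crosses n e s((i : ZMod n), (m : ZMod n))), (u z e)⁻¹
      = (z (m + 1) - z (i + 1)) * (z i - z m) / ((z (m + 1) - z m) * (z i - z (i + 1))) := by
  have hF : ∀ k ∈ Icc (m + 1) (n + i), ∀ j ∈ Icc (i + 1) m,
      z (k : ZMod n) - z (j : ZMod n) ≠ 0 := by
    intro k hk j hj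
    simp only [mem_Icc] at hk hj
    exact sub_ne_zero.2 (hz.ne (natCast_ne_natCast_of_lt_of_lt_add (by omega) (by omega)).symm)
  rw [filter_crosses_eq_image him hmn, prod_image injOn_mk_natCast, prod_product]
  simp only [inv_u_mk, ← Nat.cast_add_one]
  rw [prod_Ico_prod_Ico_div_of_ne_zero (fun k j => z (k : ZMod n) - z (j : ZMod n)) (by omega)
    (by omega) hF]
  simp only [Nat.cast_add, Nat.cast_one, ZMod.natCast_self, zero_add]

end Chords

/-- The row `v_{ℓ-1 ℓ} ↦ -u_{1 ℓ-1} ∏_{kj ≁ 1 ℓ-1} u_{kj}⁻¹` of the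
monomial map `φ_{(1ℓ)}`, as an identity of functions of the configuration `z`. -/
theorem monomial_map_row_ellm1_ell (n ℓ : ℕ) [NeZero n] (hl4 : 4 ≤ ℓ) (hln : ℓ ≤ n - 2)
    (z : ZMod n → ℝ) (hz : Function.Injective z) :
    u (fun k => z (Equiv.swap (1 : ZMod n) (ℓ : ZMod n) k))
        s((1 : ZMod n), (ℓ : ZMod n) - 1)
      = - u z s((1 : ZMod n), (ℓ : ZMod n) - 1) *
          ∏ e ∈ (chords n).filter
            (fun e => Crosses n e s((1 : ZMod n), (ℓ : ZMod n) - 1)), (u z e)⁻¹ := by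
  have hℓ : ((ℓ - 1 : ℕ) : ZMod n) = (ℓ : ZMod n) - 1 := by
    rw [Nat.cast_sub (by omega), Nat.cast_one]
  have hprod := prod_inv_u_crosses hz (i := 1) (m := ℓ - 1) (by omega) (by omega)
  rw [Nat.cast_one, hℓ, sub_add_cancel, one_add_one_eq_two] at hprod
  have hne (a b : ℕ) (hab : a < b) (hb : b < n) : (a : ZMod n) ≠ b :=
    natCast_ne_natCast_of_lt_of_lt_add hab (by omega)
  have h12 : (1 : ZMod n) ≠ 2 := by simpa using hne 1 2 (by omega) (by omega)
  have h1q : (1 : ZMod n) ≠ ℓ - 1 := by simpa [hℓ] using hne 1 (ℓ - 1) (by omega) (by omega)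
  have h2r : (2 : ZMod n) ≠ ℓ := by simpa using hne 2 ℓ (by omega) (by omega)
  have hqr : (ℓ : ZMod n) - 1 ≠ ℓ := by simpa [hℓ] using hne (ℓ - 1) ℓ (by omega) (by omega)
  rw [hprod]
  simp only [u, Sym2.lift_mk, sub_add_cancel, one_add_one_eq_two, Equiv.swap_apply_left,
    Equiv.swap_apply_right, Equiv.swap_apply_of_ne_of_ne h1q.symm hqr,
    Equiv.swap_apply_of_ne_of_ne h12.symm h2r]
  have hz12 := sub_ne_zero.2 (hz.ne h12)
  have hz21 := sub_ne_zero.2 (hz.ne h12.symm)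
  have hz1q := sub_ne_zero.2 (hz.ne h1q)
  have hz2r := sub_ne_zero.2 (hz.ne h2r)
  have hzrq := sub_ne_zero.2 (hz.ne hqr.symm)
  field_simp
  ring

end M0n
end
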